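/- arXiv:2202.07279 — 11 statements merged into one kernel-verified Lean document; each statement's English description precedes it below -/
import Mathlib

section
/- Let n and k be positive integers with k ≤ n. Then n / gcd(n, k) divides the binomial coefficient C(n, k). -/
theorem stmt_5 (n k : ℕ) (hn : 0 < n) (hk : 1 ≤ k) (hkn : k ≤ n) :
    n / Nat.gcd n k ∣ n.choose k := by
  set d := Nat.gcd n k with hd
  have hd0 : 0 < d := Nat.gcd_pos_of_pos_left _ hn
  have hdn : d ∣ n := Nat.gcd_dvd_left n k
  have hdk : d ∣ k := Nat.gcd_dvd_right n k
  -- key identity: n * C(n-1, k-1) = C(n,k) * k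
  have key : n * Nat.choose (n - 1) (k - 1) = Nat.choose n k * k := by
    obtain ⟨m, rfl⟩ := Nat.exists_eq_add_of_le hn
    obtain ⟨j, rfl⟩ := Nat.exists_eq_add_of_le hk
    simpa [Nat.add_comm, Nat.succ_eq_add_one] using Nat.add_one_mul_choose_eq m j
  have key2 : (n / d) * Nat.choose (n - 1) (k - 1) = Nat.choose n k * (k / d) := by
    apply Nat.eq_of_mul_eq_mul_left hd0
    calc d * ((n / d) * Nat.choose (n - 1) (k - 1))
        = (d * (n / d)) * Nat.choose (n - 1) (k - 1) := by ring
      _ = n * Nat.choose (n - 1) (k - 1) := by rw [Nat.mul_div_cancel' hdn]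
      _ = Nat.choose n k * k := key
      _ = Nat.choose n k * (d * (k / d)) := by rw [Nat.mul_div_cancel' hdk]
      _ = d * (Nat.choose n k * (k / d)) := by ring
  have hcop : Nat.Coprime (n / d) (k / d) := Nat.coprime_div_gcd_div_gcd hd0
  have : n / d ∣ Nat.choose n k * (k / d) := ⟨_, key2.symm⟩
  exact hcop.dvd_of_dvd_mul_right this
end

section
/- Let n, l be integers with n ≥ 2 and l ≥ 2, and let j be an integer with 1 ≤ j ≤ n-1. Then l^(n-j) divides the binomial coefficient C(l^(n-1), j). -/
/-!
Write `m = l ^ k`. The identity `(i + 1) * C(m, i + 1) = m * C(m - 1, i)` shows that `l ^ k` divides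
`(i + 1) * C(m, i + 1)`. For a prime `p` dividing `l`, the factor `i + 1` absorbs at most `i` of the
`k * v_p(l)` factors `p`, hence at most `i * v_p(l)` of them, and the rest divide `C(m, i + 1)`.
-/

namespace Nat

theorem dvd_add_one_mul_choose (m i : ℕ) : m ∣ (i + 1) * m.choose (i + 1) := by
  cases m with
  | zero => simp
  | succ m => exact ⟨m.choose i, by rw [add_one_mul_choose_eq, mul_comm]⟩

theorem pow_sub_dvd_choose_pow (l k i : ℕ) : l ^ (k - i) ∣ (l ^ k).choose (i + 1) := by
  rcases eq_or_ne l 0 with rfl | hl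
  · cases k <;> simp
  rcases eq_or_ne ((l ^ k).choose (i + 1)) 0 with hC | hC
  · simp [hC]
  rw [← factorization_le_iff_dvd (by positivity) hC]
  intro p
  have hval := (factorization_le_iff_dvd (by positivity) (by positivity)).2
    (dvd_add_one_mul_choose (l ^ k) i) p
  have hi : (i + 1).factorization p ≤ i :=
    Nat.lt_add_one_iff.1 (factorization_lt p (add_one_ne_zero i))
  simp only [factorization_pow, factorization_mul (add_one_ne_zero i) hC, Finsupp.smul_apply,
    smul_eq_mul, Finsupp.add_apply] at hval ⊢
  rcases eq_or_ne (l.factorization p) 0 with ha | ha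
  · simp [ha]
  have hia : i ≤ i * l.factorization p := Nat.le_mul_of_pos_right i (pos_of_ne_zero ha)
  rw [Nat.sub_mul]
  omega

end Nat

theorem stmt_6_general (n l j : ℕ) (hj1 : 1 ≤ j) :
    l ^ (n - j) ∣ (l ^ (n - 1)).choose j := by
  obtain ⟨i, rfl⟩ : ∃ i, j = i + 1 := ⟨j - 1, by omega⟩
  rw [show n - (i + 1) = n - 1 - i by omega]
  exact Nat.pow_sub_dvd_choose_pow l (n - 1) i

theorem stmt_6 (n l j : ℕ) (hn : 2 ≤ n) (hl : 2 ≤ l) (hj1 : 1 ≤ j) (hj2 : j ≤ n - 1) :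
    l ^ (n - j) ∣ (l ^ (n - 1)).choose j :=
  stmt_6_general n l j hj1
end

section
/- Let n, l be integers with n ≥ 3 and l ≥ 2, and let j be an integer with 2 ≤ j ≤ n-1. Then l^(n-j) divides the binomial coefficient C(2·l^(n-2), j). -/
/-!
Write `m = 2 l^(n-2)`. From `m * C(m-1, j-1) = j * C(m, j)` one gets `m / gcd(m, j) ∣ C(m, j)`.
A prime power `p^k ∣ j` has `p^k ≤ j ≤ 2^(j-1)`, so `k ≤ j - 1`, and `k ≤ j - 2` for odd `p`;
hence `gcd(m, j) ∣ 2 l^(j-2)`, and the factor `l^(n-j)` of `m = l^(n-j) * 2 l^(j-2)` survives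
the division by `gcd(m, j)`.
-/

namespace Nat

theorem dvd_choose_mul (m j : ℕ) : m ∣ m.choose j * j := by
  rcases m with _ | m <;> rcases j with _ | j
  · simp
  · simp
  · simp
  · exact Dvd.intro _ (add_one_mul_choose_eq m j)

theorem div_gcd_dvd_choose {m : ℕ} (hm : 0 < m) (j : ℕ) : m / m.gcd j ∣ m.choose j := by
  have h : m.choose j * j ≡ 0 * j [MOD m] := by
    rw [zero_mul]
    exact modEq_zero_iff_dvd.mpr (dvd_choose_mul m j)
  exact modEq_zero_iff_dvd.mp (h.cancel_right_div_gcd hm)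

theorem prime_pow_dvd_two_mul_pow_sub_two {p k l j : ℕ} (hp : p.Prime) (hpl : p ∣ l)
    (hj : 2 ≤ j) (hpk : p ^ k ∣ j) : p ^ k ∣ 2 * l ^ (j - 2) := by
  have hpk_le : p ^ k ≤ j := le_of_dvd (by omega) hpk
  have hj_le : j ≤ 2 ^ (j - 1) := by
    have := (j - 1).lt_two_pow_self
    omega
  have hpl_pow : p ^ (j - 2) ∣ l ^ (j - 2) := pow_dvd_pow_of_dvd hpl _
  obtain rfl | hp2 := eq_or_ne p 2
  · have hk : k ≤ j - 1 :=
      (pow_le_pow_iff_right₀ one_lt_two).mp (hpk_le.trans hj_le)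
    calc 2 ^ k ∣ 2 ^ (j - 1) := pow_dvd_pow 2 hk
      _ = 2 * 2 ^ (j - 2) := by rw [← pow_succ']; congr 1; omega
      _ ∣ 2 * l ^ (j - 2) := mul_dvd_mul_left 2 hpl_pow
  · have hp3 : 3 ≤ p := hp.two_le.lt_of_ne' hp2
    have hk : k < j - 1 := by
      refine (pow_lt_pow_iff_right₀ hp.one_lt).mp (lt_of_le_of_lt (hpk_le.trans hj_le) ?_)
      exact (Nat.pow_lt_pow_left (by omega) (by omega)).trans_le (Nat.pow_le_pow_left hp3 _)
    exact ((pow_dvd_pow p (by omega)).trans hpl_pow).mul_left 2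

theorem gcd_two_mul_pow_dvd (l N : ℕ) {j : ℕ} (hj : 2 ≤ j) :
    gcd (2 * l ^ N) j ∣ 2 * l ^ (j - 2) := by
  refine (dvd_iff_prime_pow_dvd_dvd _ _).mpr fun p k hp hpk => ?_
  by_cases hpl : p ∣ l
  · exact prime_pow_dvd_two_mul_pow_sub_two hp hpl hj (hpk.trans (gcd_dvd_right _ _))
  · have hcop : Coprime (p ^ k) (l ^ N) := ((hp.coprime_iff_not_dvd).mpr hpl).pow k N
    exact (hcop.dvd_of_dvd_mul_right (hpk.trans (gcd_dvd_left _ _))).mul_right _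

end Nat

theorem stmt_7_general (n l j : ℕ) (hl : 2 ≤ l) (hj1 : 2 ≤ j) (hj2 : j ≤ n - 1) :
    l ^ (n - j) ∣ (2 * l ^ (n - 2)).choose j := by
  have hm : 2 * l ^ (n - 2) = l ^ (n - j) * (2 * l ^ (j - 2)) := by
    rw [show n - 2 = (n - j) + (j - 2) by omega, pow_add]
    ring
  have hgcd := Nat.gcd_two_mul_pow_dvd l (n - 2) hj1
  refine dvd_trans ?_ (Nat.div_gcd_dvd_choose (by positivity) j)
  rw [hm, Nat.mul_div_assoc _ (hm ▸ hgcd)]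
  exact dvd_mul_right _ _

theorem stmt_7 (n l j : ℕ) (hn : 3 ≤ n) (hl : 2 ≤ l) (hj1 : 2 ≤ j) (hj2 : j ≤ n - 1) :
    l ^ (n - j) ∣ (2 * l ^ (n - 2)).choose j :=
  stmt_7_general n l j hl hj1 hj2
end

section
/- Let N = l^n with l ≥ 2 and n ≥ 2, let 1 ≤ m ≤ n-1 and let a be any integer. Then the product of 2·l^(n-m) copies of the matrix [[a·l^m, -1], [1, 0]] over Z/NZ equals (-1)^(l^(n-m)) times the identity matrix. In particular, the 2·l^(n-m)-tuple all of whose entries are a·l^m mod N is a solution of M_n(a_1,...,a_n) = ± Id over Z/NZ. -/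
open Polynomial

lemma aux_step {R : Type*} [CommRing R] (l t : ℕ) (ht : 1 ≤ t) (x : R)
    (h : (l : R) ^ t ∣ x - 1) : (l : R) ^ (t + 1) ∣ x ^ l - 1 := by
  have hgeom : x ^ l - 1 = (∑ i ∈ Finset.range l, x ^ i) * (x - 1) :=
    (geom_sum_mul x l).symm
  have h2 : (l : R) ^ t ∣ (∑ i ∈ Finset.range l, x ^ i) - (l : R) := by
    have hsum : (∑ i ∈ Finset.range l, x ^ i) - (l : R)
        = ∑ i ∈ Finset.range l, (x ^ i - 1) := by
      rw [Finset.sum_sub_distrib]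
      simp
    rw [hsum]
    refine Finset.dvd_sum fun i _ => h.trans ?_
    simpa using sub_dvd_pow_sub_pow x 1 i
  obtain ⟨w, hw⟩ := h2
  obtain ⟨e, he⟩ := h
  have hsum' : (∑ i ∈ Finset.range l, x ^ i) = (l : R) + (l : R) ^ t * w := by
    rw [← hw]; ring
  rw [hgeom, hsum', he]
  have hexp : ((l : R) + (l : R) ^ t * w) * ((l : R) ^ t * e)
      = (l : R) ^ (t + 1) * e + (l : R) ^ (2 * t) * (w * e) := by
    rw [two_mul, pow_add, pow_succ]; ring
  rw [hexp]
  exact dvd_add ⟨e, rfl⟩ ((pow_dvd_pow (l : R) (by omega)).mul_right _)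

lemma aux_iter {R : Type*} [CommRing R] (l m : ℕ) (hm : 1 ≤ m) (x : R)
    (h : (l : R) ^ m ∣ x - 1) : ∀ s, (l : R) ^ (m + s) ∣ x ^ (l ^ s) - 1 := by
  intro s
  induction s with
  | zero => simpa using h
  | succ s ih =>
    have hstep := aux_step l (m + s) (by omega) _ ih
    rw [← pow_mul, ← pow_succ] at hstep
    have : m + (s + 1) = m + s + 1 := by omega
    rw [this]
    exact hstep

theorem stmt_11 (l n : ℕ) (hl : 2 ≤ l) (hn : 2 ≤ n) (N : ℕ) (hN : N = l ^ n)
    (m : ℕ) (hm1 : 1 ≤ m) (hm2 : m ≤ n - 1) (a : ℤ) :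
    (!![((a * l ^ m : ℤ) : ZMod N), -1; 1, 0]) ^ (2 * l ^ (n - m)) =
      (-1 : ZMod N) ^ (l ^ (n - m)) • (1 : Matrix (Fin 2) (Fin 2) (ZMod N)) := by
  set b : ZMod N := ((a * l ^ m : ℤ) : ZMod N) with hb
  set A : Matrix (Fin 2) (Fin 2) (ZMod N) := !![b, -1; 1, 0] with hA
  set k : ℕ := l ^ (n - m) with hk
  -- A² = -(1 - b • A)
  have hA2 : A ^ 2 = -(1 - b • A) := by
    ext i j
    fin_cases i <;> fin_cases j <;>
      simp [hA, pow_two, Matrix.mul_apply, Fin.sum_univ_succ] <;> ring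
  -- polynomial argument
  have key : (1 - b • A) ^ k = 1 := by
    set p : Polynomial ℤ := 1 - Polynomial.C a * (l : Polynomial ℤ) ^ m * Polynomial.X with hp
    have hdvd : (l : Polynomial ℤ) ^ m ∣ p - 1 := ⟨-(Polynomial.C a * Polynomial.X), by rw [hp]; ring⟩
    have h2 := aux_iter l m hm1 p hdvd (n - m)
    have hmn : m + (n - m) = n := by omega
    rw [hmn] at h2
    obtain ⟨w, hw⟩ := h2
    have hmap := congrArg (Polynomial.aeval A) hw
    simp only [map_sub, map_mul, map_pow, map_one, map_natCast, Polynomial.aeval_X,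
      map_ofNat, Polynomial.aeval_C] at hmap
    have hcastN : ((l : Matrix (Fin 2) (Fin 2) (ZMod N)) ^ n) = 0 := by
      have : ((l ^ n : ℕ) : Matrix (Fin 2) (Fin 2) (ZMod N)) = ((N : ℕ) : Matrix (Fin 2) (Fin 2) (ZMod N)) := by
        rw [hN]
      rw [← Nat.cast_pow, this]
      have hz : ((N : ℕ) : ZMod N) = 0 := ZMod.natCast_self N
      calc ((N : ℕ) : Matrix (Fin 2) (Fin 2) (ZMod N))
          = (Matrix.scalar (Fin 2)) ((N : ℕ) : ZMod N) := (map_natCast _ N).symm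
        _ = 0 := by rw [hz]; simp
    have haevalp : Polynomial.aeval A p = 1 - b • A := by
      rw [hp]
      simp only [map_sub, map_mul, map_pow, map_one, map_natCast, Polynomial.aeval_X,
        Polynomial.aeval_C]
      congr 1
      have h1 : (algebraMap ℤ (Matrix (Fin 2) (Fin 2) (ZMod N))) a * (l : Matrix (Fin 2) (Fin 2) (ZMod N)) ^ m
          = ((a * l ^ m : ℤ) : Matrix (Fin 2) (Fin 2) (ZMod N)) := by
        push_cast
        simp [algebraMap_int_eq]
      rw [h1]
      rw [show ((a * l ^ m : ℤ) : Matrix (Fin 2) (Fin 2) (ZMod N)) * A = (a * l ^ m : ℤ) • A from by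
        rw [← zsmul_eq_mul]]
      rw [hb]
      exact (Int.cast_smul_eq_zsmul (ZMod N) (a * l ^ m : ℤ) A).symm
    rw [haevalp] at hmap
    have : (1 - b • A) ^ k - 1 = 0 := by
      rw [hmap, hcastN, zero_mul]
    linear_combination (norm := (rw [hk]; abel)) this
  -- assemble
  have hfinal : A ^ (2 * k) = (-(1 : Matrix (Fin 2) (Fin 2) (ZMod N))) ^ k := by
    rw [pow_mul, hA2, neg_pow, key, mul_one, neg_pow, one_pow, mul_one]
  rw [hfinal]
  have : (-(1 : Matrix (Fin 2) (Fin 2) (ZMod N))) = (-1 : ZMod N) • 1 := by simp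
  rw [this, _root_.smul_pow, one_pow]
end

section
/- Let N = l^n with l > 2 and n ≥ 3, let 1 ≤ m ≤ n-2 and let a be any integer. Then M_t(x_1,...,x_t) = ± Id over Z/NZ, where t = 2·l^(n-m) - 4·l^(n-m-1) + 2 and the tuple (x_1,...,x_t) has x_1 = x_t = 2a·l^(n-1) mod N and all other entries equal to a·l^m mod N. More precisely, this product equals (-1)^(1 + l^(n-m-1)(l+2)) times the identity. -/
/-!
Write `A = !![b, -1; 1, 0]` with `b = a l^m` and `c = 2 a l^(n-1)`. By Cayley–Hamilton
`A² = -(1 - b A)`, so `A^(2K) = (-1)^K (1 - b A)^K` for `K = l^(n-m-1) (l-2)`.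
In a commutative ring, if `l^k ∣ w` with `k ≥ 1` then `(1 + w)^l = 1 + l w + e` with
`l^(2k) ∣ e`, and `l^(2k+1) ∣ 2e` (for even `l` only the double gains the extra factor).
Iterating inside the commutative ring generated by `A` gives
`(1 - b A)^(l^(n-m-1)) = 1 - a l^(n-1) A + e` with `l^(n-1) ∣ e` and `2e = 0`,
and the remaining power `l - 2 ≡ -2 (mod l)` turns this into `1 + c A`.
Since `c² = c b = 0`, finally `B (1 + c A) B = -1` for `B = !![c, -1; 1, 0]`.
-/

section Binomial

variable {S : Type*} [CommRing S]

theorem exists_one_add_pow_eq (w : S) (L : ℕ) :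
    ∃ r, (1 + w) ^ L = 1 + L * w + L.choose 2 * w ^ 2 + w ^ 3 * r := by
  induction L with
  | zero => exact ⟨0, by simp⟩
  | succ L ih =>
    obtain ⟨r, hr⟩ := ih
    refine ⟨L.choose 2 + r + w * r, ?_⟩
    rw [pow_succ, hr, Nat.choose_succ_succ', Nat.choose_one_right]
    push_cast
    ring

theorem dvd_two_mul_choose_two (l : ℕ) : l ∣ 2 * l.choose 2 := by
  rw [Nat.choose_two_right, Nat.mul_div_cancel' (Nat.even_mul_pred_self l).two_dvd]
  exact dvd_mul_right l _

theorem exists_one_add_pow_eq_of_pow_dvd (l : ℕ) {k : ℕ} (hk : 1 ≤ k) {w : S}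
    (hw : (l : S) ^ k ∣ w) :
    ∃ e, (1 + w) ^ l = 1 + l * w + e ∧
      (l : S) ^ (2 * k) ∣ e ∧ (l : S) ^ (2 * k + 1) ∣ 2 * e := by
  obtain ⟨r, hr⟩ := exists_one_add_pow_eq w l
  have hw2 : (l : S) ^ (2 * k) ∣ w ^ 2 := by
    rw [mul_comm, pow_mul]; exact pow_dvd_pow_of_dvd hw 2
  have hw3 : (l : S) ^ (2 * k + 1) ∣ w ^ 3 := by
    refine (pow_dvd_pow _ (by omega : 2 * k + 1 ≤ 3 * k)).trans ?_
    rw [mul_comm, pow_mul]; exact pow_dvd_pow_of_dvd hw 3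
  refine ⟨l.choose 2 * w ^ 2 + w ^ 3 * r, by rw [hr]; ring, ?_, ?_⟩
  · exact dvd_add (hw2.mul_left _) ((pow_dvd_pow _ (by omega)).trans hw3 |>.mul_right _)
  · have hchoose : (l : S) ∣ 2 * l.choose 2 := by
      simpa using Nat.cast_dvd_cast (α := S) (dvd_two_mul_choose_two l)
    have h2e : 2 * (l.choose 2 * w ^ 2 + w ^ 3 * r) =
        2 * l.choose 2 * w ^ 2 + w ^ 3 * (2 * r) := by
      ring
    rw [h2e]
    exact dvd_add (pow_succ' (l : S) _ ▸ mul_dvd_mul hchoose hw2) (hw3.mul_right _)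

theorem exists_one_add_pow_pow_eq (l : ℕ) {m : ℕ} (hm : 1 ≤ m) (u : S) (j : ℕ) :
    ∃ e, (1 + l ^ m * u) ^ l ^ j = 1 + l ^ (m + j) * u + e ∧
      (l : S) ^ (m + j) ∣ e ∧ (l : S) ^ (m + j + 1) ∣ 2 * e := by
  induction j with
  | zero => exact ⟨0, by simp⟩
  | succ j ih =>
    obtain ⟨e, he, hdvd, hdvd2⟩ := ih
    have hw : (l : S) ^ (m + j) ∣ l ^ (m + j) * u + e := dvd_add (dvd_mul_right _ _) hdvd
    obtain ⟨e', he', hdvd', hdvd2'⟩ := exists_one_add_pow_eq_of_pow_dvd l (by omega) hw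
    refine ⟨l * e + e', ?_, ?_, ?_⟩
    · rw [pow_succ, pow_mul, he, add_assoc, he']
      ring
    · rw [← add_assoc]
      exact dvd_add (pow_succ' (l : S) _ ▸ mul_dvd_mul_left _ hdvd)
        ((pow_dvd_pow _ (by omega : m + j + 1 ≤ 2 * (m + j))).trans hdvd')
    · rw [mul_add, mul_left_comm, ← add_assoc]
      exact dvd_add (pow_succ' (l : S) _ ▸ mul_dvd_mul_left _ hdvd2)
        ((pow_dvd_pow _ (by omega : m + j + 1 + 1 ≤ 2 * (m + j) + 1)).trans hdvd2')

theorem one_add_pow_eq_of_sq_eq_zero {z : S} (hz : z ^ 2 = 0) (L : ℕ) :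
    (1 + z) ^ L = 1 + L * z := by
  obtain ⟨r, hr⟩ := exists_one_add_pow_eq z L
  have hz3 : z ^ 3 = 0 := by rw [pow_succ, hz, zero_mul]
  rw [hr, hz, hz3]
  ring

theorem one_add_pow_pow_mul_sub_two {l m j : ℕ} (hl : 2 ≤ l) (hm : 1 ≤ m)
    (hnil : (l : S) ^ (m + j + 1) = 0) (u : S) :
    (1 + l ^ m * u) ^ (l ^ j * (l - 2)) = 1 - 2 * l ^ (m + j) * u := by
  obtain ⟨e, he, hdvd, hdvd2⟩ := exists_one_add_pow_pow_eq l hm u j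
  have h2e : 2 * e = 0 := by rw [← zero_dvd_iff, ← hnil]; exact hdvd2
  set z := (l : S) ^ (m + j) * u + e
  have hz : (l : S) ^ (m + j) ∣ z := dvd_add (dvd_mul_right _ _) hdvd
  have hz2 : z ^ 2 = 0 := by
    rw [← zero_dvd_iff, ← hnil]
    refine (pow_dvd_pow _ (by omega : m + j + 1 ≤ (m + j) * 2)).trans ?_
    rw [pow_mul]; exact pow_dvd_pow_of_dvd hz 2
  have hlz : (l : S) * z = 0 := by
    rw [← zero_dvd_iff, ← hnil, pow_succ']; exact mul_dvd_mul_left _ hz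
  rw [pow_mul, he, add_assoc, one_add_pow_eq_of_sq_eq_zero hz2, Nat.cast_sub hl]
  linear_combination hlz - h2e

end Binomial

open Polynomial in
theorem one_sub_smul_pow_pow_mul_sub_two {R M : Type*} [CommRing R] [Ring M] [Algebra R M]
    {l m j : ℕ} (hl : 2 ≤ l) (hm : 1 ≤ m) (hnil : (l : R) ^ (m + j + 1) = 0) (a : R) (x : M) :
    (1 - (a * l ^ m) • x) ^ (l ^ j * (l - 2)) = 1 + (2 * a * l ^ (m + j)) • x := by
  have hnilX : (l : R[X]) ^ (m + j + 1) = 0 := by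
    rw [← map_natCast C, ← map_pow, hnil, map_zero]
  have h := one_add_pow_pow_mul_sub_two hl hm hnilX (-C a * X)
  have hlhs : 1 + (l : R[X]) ^ m * (-C a * X) = 1 - (a * l ^ m) • X := by
    rw [smul_eq_C_mul]; simp only [map_mul, map_pow, map_natCast]; ring
  have hrhs : 1 - 2 * (l : R[X]) ^ (m + j) * (-C a * X) = 1 + (2 * a * l ^ (m + j)) • X := by
    rw [smul_eq_C_mul]; simp only [map_mul, map_pow, map_natCast, map_ofNat]; ring
  rw [hlhs, hrhs] at h
  simpa only [map_pow, map_add, map_sub, map_one, map_smul, aeval_X] using congrArg (aeval x) h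

theorem companion_sq {R : Type*} [CommRing R] (b : R) :
    !![b, -1; 1, 0] ^ 2 = b • !![b, -1; 1, 0] - 1 := by
  ext i k; fin_cases i <;> fin_cases k <;> simp [sq, Matrix.one_fin_two, sub_eq_add_neg]

theorem companion_pow_two_mul {R : Type*} [CommRing R] (b : R) (K : ℕ) :
    !![b, -1; 1, 0] ^ (2 * K) = (-1 : R) ^ K • (1 - b • !![b, -1; 1, 0]) ^ K := by
  rw [pow_mul, companion_sq, ← neg_sub, ← neg_one_smul R (1 - _), smul_pow]

theorem companion_mul_one_add_smul_mul_companion {R : Type*} [CommRing R] {b c : R}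
    (hcc : c * c = 0) (hcb : c * b = 0) :
    !![c, -1; 1, 0] * (1 + c • !![b, -1; 1, 0]) * !![c, -1; 1, 0] = -1 := by
  have hsum : (1 : Matrix (Fin 2) (Fin 2) R) + c • !![b, -1; 1, 0] =
      !![1 + c * b, -c; c, 1] := by
    rw [Matrix.one_fin_two, Matrix.smul_of, Matrix.of_add_of]; simp
  rw [hsum, Matrix.mul_fin_two, Matrix.mul_fin_two, Matrix.one_fin_two, Matrix.neg_of]
  simp only [Matrix.neg_cons, Matrix.neg_empty, neg_zero, EmbeddingLike.apply_eq_iff_eq,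
    Matrix.vecCons_inj, and_true]
  refine ⟨⟨?_, ?_⟩, ?_, ?_⟩
  · linear_combination (b * c - 1) * hcc
  · linear_combination -c * hcb
  · linear_combination c * hcb
  · linear_combination -hcb

theorem stmt_12_general (l n : ℕ) (hl : 2 < l) (N : ℕ) (hN : N = l ^ n)
    (m : ℕ) (hm1 : 1 ≤ m) (hm2 : m ≤ n - 2) (a : ℤ) :
    (!![((2 * a * l ^ (n - 1) : ℤ) : ZMod N), -1; 1, 0]) *
      (!![((a * l ^ m : ℤ) : ZMod N), -1; 1, 0]) ^ (2 * l ^ (n - m) - 4 * l ^ (n - m - 1)) *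
      (!![((2 * a * l ^ (n - 1) : ℤ) : ZMod N), -1; 1, 0]) =
    (-1 : ZMod N) ^ (1 + l ^ (n - m - 1) * (l + 2)) • (1 : Matrix (Fin 2) (Fin 2) (ZMod N))
    := by
  subst hN
  obtain ⟨j, rfl⟩ : ∃ j, n = m + j + 1 := ⟨n - m - 1, by omega⟩
  have hnil {k : ℕ} (hk : m + j + 1 ≤ k) : (l : ZMod (l ^ (m + j + 1))) ^ k = 0 :=
    pow_eq_zero_of_le hk (by exact_mod_cast ZMod.natCast_self _)
  have hexp : 2 * l ^ (m + j + 1 - m) - 4 * l ^ (m + j + 1 - m - 1) = 2 * (l ^ j * (l - 2)) := by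
    rw [show m + j + 1 - m = j + 1 by omega, show j + 1 - 1 = j by omega, pow_succ,
      Nat.mul_sub, Nat.mul_sub]
    ring_nf
  have hsign : (-1 : ZMod (l ^ (m + j + 1))) ^ (1 + l ^ (m + j + 1 - m - 1) * (l + 2)) =
      -(-1) ^ (l ^ j * (l - 2)) := by
    -- the base is given explicitly: otherwise `pow_add` rewrites the modulus `l ^ (m + j + 1)`
    rw [show m + j + 1 - m - 1 = j by omega,
      show 1 + l ^ j * (l + 2) = l ^ j * (l - 2) + 1 + 2 * (2 * l ^ j) by zify [hl.le]; ring,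
      pow_add (-1 : ZMod _), pow_mul, neg_one_sq, one_pow, mul_one, pow_succ (-1 : ZMod _),
      mul_neg_one]
  set c : ZMod (l ^ (m + j + 1)) := 2 * a * l ^ (m + j)
  have hcc : c * c = 0 := by
    linear_combination (4 * a * a) * hnil (k := (m + j) + (m + j)) (by omega)
  have hcb : c * (a * l ^ m) = 0 := by
    linear_combination (2 * a * a) * hnil (k := (m + j) + m) (by omega)
  push_cast
  rw [hexp, companion_pow_two_mul,
    one_sub_smul_pow_pow_mul_sub_two (by omega) hm1 (hnil le_rfl), mul_smul_comm, smul_mul_assoc,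
    companion_mul_one_add_smul_mul_companion hcc hcb, hsign, smul_neg, neg_smul]

/-- with N = l^n, l > 2, n ≥ 3, 1 ≤ m ≤ n-2, the product
M_t(x_1,…,x_t) with t = 2l^(n-m) - 4l^(n-m-1) + 2, x_1 = x_t = 2a·l^(n-1) and
middle entries a·l^m, equals (-1)^(1 + l^(n-m-1)(l+2)) · Id over Z/NZ. -/
theorem stmt_12 (l n : ℕ) (hl : 2 < l) (hn : 3 ≤ n) (N : ℕ) (hN : N = l ^ n)
    (m : ℕ) (hm1 : 1 ≤ m) (hm2 : m ≤ n - 2) (a : ℤ) :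
    (!![((2 * a * l ^ (n - 1) : ℤ) : ZMod N), -1; 1, 0]) *
      (!![((a * l ^ m : ℤ) : ZMod N), -1; 1, 0]) ^ (2 * l ^ (n - m) - 4 * l ^ (n - m - 1)) *
      (!![((2 * a * l ^ (n - 1) : ℤ) : ZMod N), -1; 1, 0]) =
    (-1 : ZMod N) ^ (1 + l ^ (n - m - 1) * (l + 2)) • (1 : Matrix (Fin 2) (Fin 2) (ZMod N)) :=
  stmt_12_general l n hl N hN m hm1 hm2 a
end

section
/- Let N = 2^n with n ≥ 4, let 2 ≤ m ≤ n-2 and let a be any integer. Then M_t(x_1,...,x_t) = -Id over Z/NZ, where t = 2^(n-m) + 2 and the tuple (x_1,...,x_t) has x_1 = x_t = a·2^(n-1) mod N and all other entries equal to a·2^m mod N. -/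
section Aux

variable {R : Type*} [CommRing R]

private lemma sq_lemma' (b : R) :
    (!![b, -1; 1, 0] : Matrix (Fin 2) (Fin 2) R) * !![b, -1; 1, 0]
      = b • !![b, -1; 1, 0] - 1 := by
  ext i j
  fin_cases i <;> fin_cases j <;>
    simp [Matrix.mul_apply, Fin.sum_univ_succ, Matrix.one_apply] <;> ring

private lemma comb' (b α β γ δ : R) (B : Matrix (Fin 2) (Fin 2) R)
    (hB : B * B = b • B - 1) :
    (α • B + β • 1) * (γ • B + δ • 1)
      = (α * γ * b + (α * δ + β * γ)) • B + (β * δ - α * γ) • 1 := by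
  have : (α • B + β • 1) * (γ • B + δ • 1)
      = (α * γ) • (B * B) + (α * δ + β * γ) • B + (β * δ) • 1 := by
    simp only [add_mul, mul_add, smul_mul_assoc, mul_smul_comm, mul_one, one_mul, smul_smul]
    module
  rw [this, hB]
  module

private lemma key' (a : R) (μ k : ℕ) : ∃ v x : R,
    (!![a * 2 ^ (μ + 2), -1; 1, 0] : Matrix (Fin 2) (Fin 2) R) ^ (2 ^ (k + 2))
      = (a * 2 ^ (μ + k + 3) * (2 * v + 1)) • !![a * 2 ^ (μ + 2), -1; 1, 0]
        + (1 + 2 ^ (2 * μ + k + 4) * x) • 1 := by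
  set B : Matrix (Fin 2) (Fin 2) R := !![a * 2 ^ (μ + 2), -1; 1, 0] with hBdef
  have hB : B * B = (a * 2 ^ (μ + 2)) • B - 1 := sq_lemma' _
  induction k with
  | zero =>
    refine ⟨a ^ 2 * 2 ^ (2 * μ + 2) - 1, -(a ^ 2), ?_⟩
    have h4 : B ^ (2 ^ 2) = (B * B) * (B * B) := by
      norm_num [pow_succ, pow_zero, one_mul, mul_assoc]
    rw [h4, hB]
    have e1 : (a * 2 ^ (μ + 2)) • B - 1
        = (a * 2 ^ (μ + 2)) • B + (-1 : R) • 1 := by module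
    rw [e1, comb' (a * 2 ^ (μ + 2)) _ _ _ _ B hB]
    congr 1
    · congr 1; ring
    · congr 1; ring
  | succ k ih =>
    obtain ⟨v, x, hvx⟩ := ih
    set w : R := 2 * v + 1 with hw
    refine ⟨v + 2 ^ (2 * μ + k + 3) * (a ^ 2 * w ^ 2 + w * x),
      x + 2 ^ (2 * μ + k + 3) * x ^ 2 - a ^ 2 * 2 ^ (k + 1) * w ^ 2, ?_⟩
    have hp : B ^ 2 ^ (k + 1 + 2) = B ^ 2 ^ (k + 2) * B ^ 2 ^ (k + 2) := by
      rw [← pow_add]; ring_nf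
    rw [hp, hvx, comb' (a * 2 ^ (μ + 2)) _ _ _ _ B hB]
    congr 1
    · congr 1; ring
    · congr 1; ring

end Aux

/-- with N = 2^n, n ≥ 4, 2 ≤ m ≤ n-2, the product
M_t(x_1,…,x_t) with t = 2^(n-m) + 2, x_1 = x_t = a·2^(n-1) and middle
entries a·2^m, equals -Id over Z/NZ. -/
theorem stmt_13 (n : ℕ) (hn : 4 ≤ n) (N : ℕ) (hN : N = 2 ^ n)
    (m : ℕ) (hm1 : 2 ≤ m) (hm2 : m ≤ n - 2) (a : ℤ) :
    (!![((a * 2 ^ (n - 1) : ℤ) : ZMod N), -1; 1, 0]) *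
      (!![((a * 2 ^ m : ℤ) : ZMod N), -1; 1, 0]) ^ (2 ^ (n - m)) *
      (!![((a * 2 ^ (n - 1) : ℤ) : ZMod N), -1; 1, 0]) =
    -(1 : Matrix (Fin 2) (Fin 2) (ZMod N)) := by
  -- arithmetic on exponents
  have hmn : m + 2 ≤ n := by omega
  set a' : ZMod N := ((a : ℤ) : ZMod N) with ha'
  have hcast1 : ((a * 2 ^ m : ℤ) : ZMod N) = a' * 2 ^ m := by push_cast; ring
  have hcast2 : ((a * 2 ^ (n - 1) : ℤ) : ZMod N) = a' * 2 ^ (n - 1) := by push_cast; ring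
  have h2n : (2 : ZMod N) ^ n = 0 := by
    have : ((2 ^ n : ℕ) : ZMod N) = 0 := by rw [← hN]; exact ZMod.natCast_self N
    push_cast at this; exact this
  obtain ⟨v, x, hvx⟩ := key' (R := ZMod N) a' (m - 2) (n - m - 2)
  have e1 : m - 2 + 2 = m := by omega
  have e2 : m - 2 + (n - m - 2) + 3 = n - 1 := by omega
  have e3 : 2 * (m - 2) + (n - m - 2) + 4 = n + (m - 2) := by omega
  have e4 : n - m - 2 + 2 = n - m := by omega
  rw [e1, e2, e3, e4] at hvx
  -- kill the correction terms
  have hz1 : (2 : ZMod N) ^ (n + (m - 2)) = 0 := by rw [pow_add, h2n, zero_mul]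
  have hz2 : a' * 2 ^ (n - 1) * (2 * v + 1) = a' * 2 ^ (n - 1) := by
    have h : (2 : ZMod N) ^ (n - 1) * 2 = 0 := by
      rw [← pow_succ]
      have : n - 1 + 1 = n := by omega
      rw [this, h2n]
    calc a' * 2 ^ (n - 1) * (2 * v + 1)
        = a' * 2 ^ (n - 1) + a' * v * (2 ^ (n - 1) * 2) := by ring
      _ = a' * 2 ^ (n - 1) := by rw [h, mul_zero, add_zero]
  rw [hz1, zero_mul, add_zero] at hvx
  rw [hz2] at hvx
  rw [hcast1, hcast2, hvx]
  -- final 2x2 computation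
  set α : ZMod N := a' * 2 ^ (n - 1) with hα
  set β : ZMod N := a' * 2 ^ m with hβ
  have hαα : α * α = 0 := by
    have h : (2 : ZMod N) ^ (n - 1) * 2 ^ (n - 1) = 2 ^ n * 2 ^ (n - 2) := by
      rw [← pow_add, ← pow_add]; congr 1; omega
    calc α * α = a' * a' * (2 ^ (n - 1) * 2 ^ (n - 1)) := by ring
      _ = a' * a' * (2 ^ n * 2 ^ (n - 2)) := by rw [h]
      _ = 0 := by rw [h2n]; ring
  have hαβ : α * β = 0 := by
    have h : (2 : ZMod N) ^ (n - 1) * 2 ^ m = 2 ^ n * 2 ^ (m - 1) := by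
      rw [← pow_add, ← pow_add]; congr 1; omega
    calc α * β = a' * a' * (2 ^ (n - 1) * 2 ^ m) := by ring
      _ = a' * a' * (2 ^ n * 2 ^ (m - 1)) := by rw [h]
      _ = 0 := by rw [h2n]; ring
  have hX : α • !![β, -1; 1, 0] + (1 : ZMod N) • (1 : Matrix (Fin 2) (Fin 2) (ZMod N))
      = !![1, -α; α, 1] := by
    ext i j
    fin_cases i <;> fin_cases j <;>
      simp [Matrix.one_apply] <;> linear_combination hαβ
  rw [hX]
  ext i j
  fin_cases i <;> fin_cases j <;>
    simp [Matrix.mul_apply, Fin.sum_univ_succ, Matrix.one_apply] <;>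
    linear_combination hαα
end

section
/- Let n ≥ 3, N = 2^(n+1), and let a be an odd integer. Then the product of 2^n copies of the matrix [[2a, -1], [1, 0]] over Z/NZ equals the matrix [[1 + 2^n·a^2, 2^n·a], [-2^n·a, 1 + 2^n·a^2]] over Z/NZ. -/
set_option maxHeartbeats 1000000

private lemma key14 (a : ℤ) : ∀ m : ℕ, ∃ d00 d01 d10 d11 : ℤ,
    (!![2 * a, -1; 1, 0] : Matrix (Fin 2) (Fin 2) ℤ) ^ (2 ^ (3 + m)) =
      !![1 + 2 ^ (3 + m) * a ^ 2 + 2 ^ (4 + m) * d00, 2 ^ (3 + m) * a + 2 ^ (4 + m) * d01;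
         -(2 ^ (3 + m) * a) + 2 ^ (4 + m) * d10, 1 + 2 ^ (3 + m) * a ^ 2 + 2 ^ (4 + m) * d11]
  | 0 => by
    refine ⟨16*a^8-28*a^6+15*a^4-3*a^2, -(8*a^7)+12*a^5-5*a^3,
            8*a^7-12*a^5+5*a^3, -(4*a^6)+5*a^4-2*a^2, ?_⟩
    have e2 : (!![2 * a, -1; 1, 0] : Matrix (Fin 2) (Fin 2) ℤ) ^ 2 =
        !![4*a^2 - 1, -(2*a); 2*a, -1] := by
      rw [pow_two]
      ext i j
      fin_cases i <;> fin_cases j <;> simp [Matrix.mul_apply, Fin.sum_univ_succ] <;> ring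
    have e4 : (!![4*a^2 - 1, -(2*a); 2*a, -1] : Matrix (Fin 2) (Fin 2) ℤ) ^ 2 =
        !![16*a^4-12*a^2+1, -(8*a^3)+4*a; 8*a^3-4*a, -(4*a^2)+1] := by
      rw [pow_two]
      ext i j
      fin_cases i <;> fin_cases j <;> simp [Matrix.mul_apply, Fin.sum_univ_succ] <;> ring
    have e8 : (2 : ℕ) ^ (3 + 0) = 2 * 2 * 2 := by norm_num
    rw [e8, pow_mul, pow_mul, e2, e4, pow_two]
    ext i j
    fin_cases i <;> fin_cases j <;>
      simp [Matrix.mul_apply, Fin.sum_univ_succ] <;> ring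
  | (m + 1) => by
    obtain ⟨d00, d01, d10, d11, hD⟩ := key14 a m
    refine ⟨d00 + 2^(1+m) * (a^4 - a^2) + 2^(2+m) * (2*a^2*d00 + a*d10 - a*d01)
              + 2^(3+m) * (d00^2 + d01*d10),
            d01 + 2^(1+m) * (2*a^3) + 2^(2+m) * (2*a^2*d01 + a*d11 + a*d00)
              + 2^(3+m) * (d01*(d00+d11)),
            d10 + 2^(1+m) * (-(2*a^3)) + 2^(2+m) * (2*a^2*d10 - a*d00 - a*d11)
              + 2^(3+m) * (d10*(d00+d11)),
            d11 + 2^(1+m) * (a^4 - a^2) + 2^(2+m) * (2*a^2*d11 - a*d01 + a*d10)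
              + 2^(3+m) * (d11^2 + d01*d10), ?_⟩
    have h2 : (2 : ℕ) ^ (3 + (m + 1)) = 2 ^ (3 + m) * 2 := by ring
    rw [h2, pow_mul, hD, pow_two]
    ext i j
    fin_cases i <;> fin_cases j <;>
      simp [Matrix.mul_apply, Fin.sum_univ_succ] <;> ring

theorem stmt_14 (n : ℕ) (hn : 3 ≤ n) (N : ℕ) (hN : N = 2 ^ (n + 1)) (a : ℤ) (ha : Odd a) :
    (!![((2 * a : ℤ) : ZMod N), -1; 1, 0]) ^ (2 ^ n) =
      !![((1 + 2 ^ n * a ^ 2 : ℤ) : ZMod N), ((2 ^ n * a : ℤ) : ZMod N);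
         ((-(2 ^ n * a) : ℤ) : ZMod N), ((1 + 2 ^ n * a ^ 2 : ℤ) : ZMod N)] := by
  obtain ⟨d00, d01, d10, d11, hD⟩ := key14 a (n - 3)
  rw [show 3 + (n - 3) = n from by omega, show 4 + (n - 3) = n + 1 from by omega] at hD
  have hz : (2 : ZMod N) ^ (n + 1) = 0 := by
    have : ((2 ^ (n + 1) : ℕ) : ZMod N) = 0 := by rw [← hN]; exact ZMod.natCast_self N
    push_cast at this
    exact this
  have hM : (!![((2 * a : ℤ) : ZMod N), -1; 1, 0]) =
      ((Int.castRingHom (ZMod N)).mapMatrix (!![2 * a, -1; 1, 0] : Matrix (Fin 2) (Fin 2) ℤ)) := by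
    ext i j
    fin_cases i <;> fin_cases j <;> simp
  rw [hM, ← map_pow, hD]
  ext i j
  fin_cases i <;> fin_cases j <;>
    simp [RingHom.mapMatrix_apply, Matrix.map_apply] <;>
    push_cast <;>
    first
      | linear_combination ((d00 : ℤ) : ZMod N) * hz
      | linear_combination ((d01 : ℤ) : ZMod N) * hz
      | linear_combination ((d10 : ℤ) : ZMod N) * hz
      | linear_combination ((d11 : ℤ) : ZMod N) * hz
end

section
/- Let N ≥ 2 and let n ≥ 3. If the tuple (a, k, k, ..., k, b) of length n over Z/NZ satisfies M_n(a, k, ..., k, b) = ± Id, then a = b and a(a - k) = 0 in Z/NZ. -/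
lemma aux16 {N : ℕ} (a b k e : ZMod N) (he : IsUnit e)
    (C : Matrix (Fin 2) (Fin 2) (ZMod N))
    (hcomm : C * !![k, -1; 1, 0] = !![k, -1; 1, 0] * C)
    (hC : !![b, -1; 1, 0] * C * !![a, -1; 1, 0] = e • 1) :
    a = b ∧ a * (a - k) = 0 := by
  obtain ⟨p, q, r, s, rfl⟩ : ∃ p q r s, C = !![p, q; r, s] :=
    ⟨_, _, _, _, Matrix.etaExpand_eq C |>.symm⟩
  have hq : q = -r := by
    have := congrFun (congrFun hcomm 0) 0
    simp [Matrix.mul_apply, Fin.sum_univ_two] at this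
    linear_combination this
  have hs : s = p + k * q := by
    have := congrFun (congrFun hcomm 0) 1
    simp [Matrix.mul_apply, Fin.sum_univ_two] at this
    linear_combination this
  have h11 : -p = e := by
    have := congrFun (congrFun hC 1) 1
    simpa [Matrix.mul_apply, Fin.sum_univ_two, Matrix.one_apply] using this
  have h01 : b * p - r = 0 := by
    have := congrFun (congrFun hC 0) 1
    simp [Matrix.mul_apply, Fin.sum_univ_two, Matrix.one_apply] at this
    linear_combination -this
  have h10 : p * a + q = 0 := by
    have := congrFun (congrFun hC 1) 0
    simpa [Matrix.mul_apply, Fin.sum_univ_two, Matrix.one_apply] using this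
  have h00 : (b * p - r) * a + (b * q - s) = e := by
    have := congrFun (congrFun hC 0) 0
    simp [Matrix.mul_apply, Fin.sum_univ_two, Matrix.one_apply] at this
    linear_combination this
  have hab : a = b := by
    apply he.mul_left_cancel
    linear_combination (b - a) * h11 - h10 + h01 + hq
  subst hab
  refine ⟨rfl, he.mul_left_cancel ?_⟩
  linear_combination h00 - a * h01 + hs + (k - a) * h10 + (a * k - a * a - 1) * h11

/-- if the n-tuple (a,k,…,k,b), n ≥ 3, is a solution of
M_n = ± Id over Z/NZ, then a = b and a(a-k) = 0. -/
theorem stmt_16 (N : ℕ) (hN : 2 ≤ N) (n : ℕ) (hn : 3 ≤ n) (a b k : ZMod N)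
    (h : (!![b, -1; 1, 0] * (!![k, -1; 1, 0]) ^ (n - 2) * !![a, -1; 1, 0]
            : Matrix (Fin 2) (Fin 2) (ZMod N)) = 1 ∨
         (!![b, -1; 1, 0] * (!![k, -1; 1, 0]) ^ (n - 2) * !![a, -1; 1, 0]
            : Matrix (Fin 2) (Fin 2) (ZMod N)) = -1) :
    a = b ∧ a * (a - k) = 0 := by
  have hcomm := ((Commute.refl (!![k, -1; 1, 0] : Matrix (Fin 2) (Fin 2) (ZMod N))).pow_left (n - 2)).symm
  rcases h with h | h
  · exact aux16 a b k 1 isUnit_one _ hcomm.symm (by simpa using h)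
  · exact aux16 a b k (-1) (IsUnit.neg isUnit_one) _ hcomm.symm (by simpa using h)
end

section
/- Let N ≥ 2, let k ∈ Z/NZ, and let n be the smallest positive integer such that the n-tuple (k, ..., k) satisfies M_n(k,...,k) = ± Id over Z/NZ. Then: (i) for any positive multiple nm of n, if the tuple (a, k, ..., k, b) of length nm is a solution of M = ± Id, then a = b = k; (ii) there is no solution of the form (a, k, ..., k, b) of length nm + 1; (iii) if (a, k, ..., k, b) of length nm + 2 is a solution, then a = b = 0. -/
/-- let n be the minimal size of a k-monomial solution over Z/NZ.
(i) a solution (a,k,…,k,b) of size nm forces a = b = k;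
(ii) there is no solution (a,k,…,k,b) of size nm+1;
(iii) a solution (a,k,…,k,b) of size nm+2 forces a = b = 0. -/
theorem stmt_17 (N : ℕ) (hN : 2 ≤ N) (k : ZMod N) (n : ℕ)
    (hmin : IsLeast {t : ℕ | 0 < t ∧
      ((!![k, -1; 1, 0] : Matrix (Fin 2) (Fin 2) (ZMod N)) ^ t = 1 ∨
       (!![k, -1; 1, 0] : Matrix (Fin 2) (Fin 2) (ZMod N)) ^ t = -1)} n)
    (m : ℕ) (hm : 0 < m) :
    (∀ a b : ZMod N,
      ((!![b, -1; 1, 0] * (!![k, -1; 1, 0]) ^ (n * m - 2) * !![a, -1; 1, 0]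
          : Matrix (Fin 2) (Fin 2) (ZMod N)) = 1 ∨
       (!![b, -1; 1, 0] * (!![k, -1; 1, 0]) ^ (n * m - 2) * !![a, -1; 1, 0]
          : Matrix (Fin 2) (Fin 2) (ZMod N)) = -1) → a = k ∧ b = k) ∧
    (∀ a b : ZMod N,
      ¬((!![b, -1; 1, 0] * (!![k, -1; 1, 0]) ^ (n * m - 1) * !![a, -1; 1, 0]
          : Matrix (Fin 2) (Fin 2) (ZMod N)) = 1 ∨
        (!![b, -1; 1, 0] * (!![k, -1; 1, 0]) ^ (n * m - 1) * !![a, -1; 1, 0]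
          : Matrix (Fin 2) (Fin 2) (ZMod N)) = -1)) ∧
    (∀ a b : ZMod N,
      ((!![b, -1; 1, 0] * (!![k, -1; 1, 0]) ^ (n * m) * !![a, -1; 1, 0]
          : Matrix (Fin 2) (Fin 2) (ZMod N)) = 1 ∨
       (!![b, -1; 1, 0] * (!![k, -1; 1, 0]) ^ (n * m) * !![a, -1; 1, 0]
          : Matrix (Fin 2) (Fin 2) (ZMod N)) = -1) → a = 0 ∧ b = 0) := by
  haveI : Fact (1 < N) := ⟨hN⟩
  set A : Matrix (Fin 2) (Fin 2) (ZMod N) := !![k, -1; 1, 0] with hA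
  set V : Matrix (Fin 2) (Fin 2) (ZMod N) := !![0, 1; -1, k] with hV
  have hAV : A * V = 1 := by simp [hA, hV, Matrix.mul_fin_two, Matrix.one_fin_two]
  have h2inv : A ^ 2 * (V * V) = 1 := by
    rw [pow_two, mul_assoc, ← mul_assoc A V V, hAV, one_mul, hAV]
  -- n ≥ 2
  have hn2 : 2 ≤ n := by
    by_contra h
    push_neg at h
    obtain ⟨hpos, hcases⟩ := hmin.1
    interval_cases n
    rcases hcases with h1 | h1 <;>
    · have := congrArg (fun M : Matrix (Fin 2) (Fin 2) (ZMod N) => M 0 1) h1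
      simp [hA, Matrix.one_apply] at this
  have hnm2 : 2 ≤ n * m := le_trans hn2 (Nat.le_mul_of_pos_right n hm)
  -- A^(nm) = ±1
  have hpow : A ^ (n * m) = 1 ∨ A ^ (n * m) = -1 := by
    rcases hmin.1.2 with h | h
    · left; rw [pow_mul, h, one_pow]
    · rw [pow_mul, h]
      rcases Nat.even_or_odd m with he | ho
      · left; exact he.neg_one_pow
      · right; exact ho.neg_one_pow
  refine ⟨?_, ?_, ?_⟩
  · -- part (i)
    intro a b hab
    have ht : A ^ (n * m - 2) = A ^ (n * m) * (V * V) := by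
      have e : A ^ (n * m - 2) * A ^ 2 = A ^ (n * m) := by
        rw [← pow_add]; congr 1; omega
      calc A ^ (n * m - 2) = A ^ (n * m - 2) * (A ^ 2 * (V * V)) := by rw [h2inv, mul_one]
        _ = (A ^ (n * m - 2) * A ^ 2) * (V * V) := by rw [mul_assoc]
        _ = A ^ (n * m) * (V * V) := by rw [e]
    have hC : (!![b, -1; 1, 0] : Matrix (Fin 2) (Fin 2) (ZMod N)) * (V * V) * !![a, -1; 1, 0] = 1 ∨
        (!![b, -1; 1, 0] : Matrix (Fin 2) (Fin 2) (ZMod N)) * (V * V) * !![a, -1; 1, 0] = -1 := by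
      rw [ht] at hab
      rcases hpow with hs | hs <;> rw [hs] at hab
      · simpa using hab
      · have e2 : (!![b, -1; 1, 0] : Matrix (Fin 2) (Fin 2) (ZMod N)) * (-1 * (V * V)) * !![a, -1; 1, 0]
            = -(!![b, -1; 1, 0] * (V * V) * !![a, -1; 1, 0]) := by noncomm_ring
        rw [e2] at hab
        rcases hab with h | h
        · exact Or.inr (neg_eq_iff_eq_neg.mp h)
        · exact Or.inl (neg_injective h)
    rcases hC with h | h <;>
    · have h01 := congrArg (fun M : Matrix (Fin 2) (Fin 2) (ZMod N) => M 0 1) h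
      have h10 := congrArg (fun M : Matrix (Fin 2) (Fin 2) (ZMod N) => M 1 0) h
      simp [hV, Matrix.mul_fin_two, Matrix.one_apply] at h01 h10
      constructor
      · linear_combination -h10
      · linear_combination h01
  · -- part (ii)
    intro a b hab
    have ht : A ^ (n * m - 1) = A ^ (n * m) * V := by
      have e : A ^ (n * m - 1) * A = A ^ (n * m) := by
        rw [← pow_succ]; congr 1; omega
      calc A ^ (n * m - 1) = A ^ (n * m - 1) * (A * V) := by rw [hAV, mul_one]
        _ = (A ^ (n * m - 1) * A) * V := by rw [mul_assoc]
        _ = A ^ (n * m) * V := by rw [e]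
    rw [ht] at hab
    rcases hpow with hs | hs <;> rw [hs] at hab <;>
    rcases hab with h | h <;>
    · have h10 := congrArg (fun M : Matrix (Fin 2) (Fin 2) (ZMod N) => M 1 0) h
      simp [hV, Matrix.mul_fin_two, Matrix.one_apply] at h10
  · -- part (iii)
    intro a b hab
    rcases hpow with hs | hs <;> rw [hs] at hab <;>
    rcases hab with h | h <;>
    · have h01 := congrArg (fun M : Matrix (Fin 2) (Fin 2) (ZMod N) => M 0 1) h
      have h10 := congrArg (fun M : Matrix (Fin 2) (Fin 2) (ZMod N) => M 1 0) h
      simp [Matrix.mul_fin_two, Matrix.one_apply] at h01 h10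
      exact ⟨h10, h01⟩
end

section
/- Let n ≥ 2, N = 2^n, and let a be an odd integer. Then the smallest positive integer t such that the product of t copies of [[2a, -1], [1, 0]] over Z/NZ equals ± Id is t = 2^n. -/
/-!
Let `U` be the Lucas sequence `U 0 = 0`, `U 1 = 1`, `U (t + 2) = 2a U (t + 1) - U t`; then
`M ^ t = !![U (t + 1), -U t; U t, -U (t - 1)]`. So `M ^ t ≡ ±1 (mod 2 ^ n)` forces
`2 ^ n ∣ U t`. Conversely, if `2 ^ n ∣ U t`, the Cassini identity `det (M ^ t) = 1` gives
`U (t + 1) ^ 2 ≡ 1 (mod 2 ^ (n + 1))`, hence `U (t + 1) ≡ ±1 (mod 2 ^ n)`, and `M ^ t ≡ ±1`.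
Finally, for odd `a` the `2`-adic valuations of `U t` and `t` agree: `U t ≡ t (mod 2)`, and
`U (2s) = 2 U s (U (s + 1) - a U s)` with the last factor odd. So `M ^ t ≡ ±1` iff `2 ^ n ∣ t`.
-/

section CommRing

variable {R : Type*} [CommRing R]

def lucasU (P : R) : ℕ → R
  | 0 => 0
  | 1 => 1
  | t + 2 => P * lucasU P (t + 1) - lucasU P t

def lucasMatrix (P : R) : Matrix (Fin 2) (Fin 2) R := !![P, -1; 1, 0]

variable (P : R)

@[simp] lemma lucasU_zero : lucasU P 0 = 0 := rfl

@[simp] lemma lucasU_one : lucasU P 1 = 1 := rfl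

lemma lucasU_add_two (t : ℕ) : lucasU P (t + 2) = P * lucasU P (t + 1) - lucasU P t := rfl

-- The last entry is `-U (t - 1)`, written so as to avoid the truncated `0 - 1`.
lemma lucasMatrix_pow (t : ℕ) :
    lucasMatrix P ^ t =
      !![lucasU P (t + 1), -lucasU P t; lucasU P t, lucasU P (t + 1) - P * lucasU P t] := by
  induction t with
  | zero => simp [Matrix.one_fin_two]
  | succ t ih =>
    rw [pow_succ, ih, lucasMatrix, Matrix.mul_fin_two, lucasU_add_two]
    congr 1; ring_nf

lemma lucasU_add (m n : ℕ) :
    lucasU P (m + n) =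
      lucasU P m * lucasU P (n + 1) + (lucasU P (m + 1) - P * lucasU P m) * lucasU P n := by
  have h := congrArg (· 1 0) (pow_add (lucasMatrix P) m n)
  simp only [lucasMatrix_pow, Matrix.mul_fin_two] at h
  simpa using h

lemma lucasU_two_mul (s : ℕ) :
    lucasU P (2 * s) = lucasU P s * (2 * lucasU P (s + 1) - P * lucasU P s) := by
  rw [two_mul, lucasU_add]; ring

lemma lucasU_sq_sub_mul_add_sq (t : ℕ) :
    lucasU P (t + 1) ^ 2 - P * lucasU P t * lucasU P (t + 1) + lucasU P t ^ 2 = 1 := by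
  have h := congrArg Matrix.det (lucasMatrix_pow P t)
  rw [Matrix.det_pow, lucasMatrix, Matrix.det_fin_two_of, Matrix.det_fin_two_of] at h
  linear_combination -h

lemma map_lucasU {S : Type*} [CommRing S] (f : R →+* S) (t : ℕ) :
    f (lucasU P t) = lucasU (f P) t := by
  induction t using Nat.twoStepInduction with
  | zero => simp
  | one => simp
  | more t ih₁ ih₂ => simp [lucasU_add_two, ih₁, ih₂]

lemma lucasMatrix_pow_eq_scalar_iff (t : ℕ) (c : R) :
    lucasMatrix P ^ t = !![c, 0; 0, c] ↔ lucasU P t = 0 ∧ lucasU P (t + 1) = c := by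
  rw [lucasMatrix_pow]
  simp only [EmbeddingLike.apply_eq_iff_eq, Matrix.vecCons_inj, and_true, neg_eq_zero]
  constructor
  · rintro ⟨⟨h1, h0⟩, -⟩
    exact ⟨h0, h1⟩
  · rintro ⟨h0, h1⟩
    simp [h0, h1]

end CommRing

lemma even_lucasU_two_mul_iff (a : ℤ) (t : ℕ) : Even (lucasU (2 * a) t) ↔ Even t := by
  induction t using Nat.twoStepInduction with
  | zero => simp
  | one => simp
  | more t ih _ => simp [lucasU_add_two, Int.even_sub, mul_assoc, ih, parity_simps]

lemma two_pow_dvd_lucasU_iff {a : ℤ} (ha : Odd a) (k t : ℕ) :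
    (2 : ℤ) ^ k ∣ lucasU (2 * a) t ↔ 2 ^ k ∣ t := by
  induction k generalizing t with
  | zero => simp
  | succ k ih =>
    obtain ⟨s, rfl | rfl⟩ := Nat.even_or_odd' t
    · have hodd : Odd (lucasU (2 * a) (s + 1) - a * lucasU (2 * a) s) := by
        rw [← Int.not_even_iff_odd] at ha ⊢
        simp [Int.even_sub, Int.even_mul, even_lucasU_two_mul_iff, -Nat.not_even_iff_odd, ha,
          parity_simps]
      have hU : lucasU (2 * a) (2 * s) =
          2 * (lucasU (2 * a) s * (lucasU (2 * a) (s + 1) - a * lucasU (2 * a) s)) := by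
        rw [lucasU_two_mul]; ring
      have hcop := (Int.isCoprime_two_left.mpr hodd).pow_left (m := k)
      rw [hU, pow_succ', pow_succ', mul_dvd_mul_iff_left two_ne_zero,
        Nat.mul_dvd_mul_iff_left two_pos, ← ih]
      exact ⟨hcop.dvd_of_dvd_mul_right, fun h => dvd_mul_of_dvd_left h _⟩
    · have hodd : ¬ (2 : ℤ) ∣ lucasU (2 * a) (2 * s + 1) := by
        rw [← even_iff_two_dvd, even_lucasU_two_mul_iff]; simp
      refine iff_of_false (fun h => hodd ((dvd_pow_self 2 k.succ_ne_zero).trans h)) fun h => ?_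
      have := (dvd_pow_self 2 k.succ_ne_zero).trans h
      omega

lemma Int.two_pow_dvd_sub_one_or_add_one_of_dvd_sq_sub_one {x : ℤ} {n : ℕ}
    (h : 2 ^ (n + 1) ∣ x ^ 2 - 1) : 2 ^ n ∣ x - 1 ∨ 2 ^ n ∣ x + 1 := by
  rcases n with _ | n
  · simp
  have hx : Odd x := by
    have h2 := (dvd_pow_self 2 (n + 1).succ_ne_zero).trans h
    rw [← even_iff_two_dvd] at h2
    simpa [Int.even_sub, parity_simps] using h2
  obtain ⟨y, rfl⟩ := hx
  have hy : 2 ^ n ∣ y * (y + 1) := by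
    rwa [show (2 : ℤ) ^ (n + 1 + 1) = 4 * 2 ^ n by ring,
      show (2 * y + 1) ^ 2 - 1 = 4 * (y * (y + 1)) by ring,
      mul_dvd_mul_iff_left four_ne_zero] at h
  rw [pow_succ', show 2 * y + 1 - 1 = 2 * y by ring, show 2 * y + 1 + 1 = 2 * (y + 1) by ring,
    mul_dvd_mul_iff_left two_ne_zero, mul_dvd_mul_iff_left two_ne_zero]
  rcases Int.even_or_odd y with hy' | hy'
  · left
    exact ((Int.isCoprime_two_left.mpr hy'.add_one).pow_left).dvd_of_dvd_mul_right hy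
  · right
    exact ((Int.isCoprime_two_left.mpr hy').pow_left).dvd_of_dvd_mul_left hy

lemma two_pow_dvd_lucasU_succ_sub_one_or_add_one (a : ℤ) {n t : ℕ}
    (h : 2 ^ n ∣ lucasU (2 * a) t) :
    2 ^ n ∣ lucasU (2 * a) (t + 1) - 1 ∨ 2 ^ n ∣ lucasU (2 * a) (t + 1) + 1 := by
  rcases n with _ | n
  · simp
  obtain ⟨w, hw⟩ := h
  apply Int.two_pow_dvd_sub_one_or_add_one_of_dvd_sq_sub_one
  refine ⟨a * lucasU (2 * a) (t + 1) * w - 2 ^ n * w ^ 2, ?_⟩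
  linear_combination lucasU_sq_sub_mul_add_sq (2 * a) t +
    (2 * a * lucasU (2 * a) (t + 1) - lucasU (2 * a) t - 2 ^ (n + 1) * w) * hw

lemma lucasMatrix_pow_eq_one_or_neg_one_iff (a : ℤ) (n t : ℕ) :
    lucasMatrix ((2 * a : ℤ) : ZMod (2 ^ n)) ^ t = 1 ∨
        lucasMatrix ((2 * a : ℤ) : ZMod (2 ^ n)) ^ t = -1 ↔
      (2 : ℤ) ^ n ∣ lucasU (2 * a) t := by
  have hcast (s : ℕ) :
      ((lucasU (2 * a) s : ℤ) : ZMod (2 ^ n)) = lucasU ((2 * a : ℤ) : ZMod (2 ^ n)) s :=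
    map_lucasU (2 * a) (Int.castRingHom (ZMod (2 ^ n))) s
  have hzero (x : ℤ) : (x : ZMod (2 ^ n)) = 0 ↔ (2 : ℤ) ^ n ∣ x := by
    exact_mod_cast ZMod.intCast_zmod_eq_zero_iff_dvd x (2 ^ n)
  have hneg : -!![(1 : ZMod (2 ^ n)), 0; 0, 1] = !![-1, 0; 0, -1] := by simp
  rw [Matrix.one_fin_two, hneg, lucasMatrix_pow_eq_scalar_iff, lucasMatrix_pow_eq_scalar_iff,
    ← and_or_left, ← hcast, ← hcast, hzero, and_iff_left_iff_imp]
  intro h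
  rcases two_pow_dvd_lucasU_succ_sub_one_or_add_one a h with h' | h' <;>
    rw [← hzero] at h' <;> push_cast at h'
  · exact .inl (sub_eq_zero.mp h')
  · exact .inr (eq_neg_of_add_eq_zero_left h')

theorem stmt_18_general (n : ℕ) (N : ℕ) (hN : N = 2 ^ n) (a : ℤ) (ha : Odd a) :
    IsLeast {t : ℕ | 0 < t ∧
      ((!![((2 * a : ℤ) : ZMod N), -1; 1, 0] : Matrix (Fin 2) (Fin 2) (ZMod N)) ^ t = 1 ∨
       (!![((2 * a : ℤ) : ZMod N), -1; 1, 0] : Matrix (Fin 2) (Fin 2) (ZMod N)) ^ t = -1)}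
      (2 ^ n) := by
  subst hN
  have key (t : ℕ) : lucasMatrix ((2 * a : ℤ) : ZMod (2 ^ n)) ^ t = 1 ∨
      lucasMatrix ((2 * a : ℤ) : ZMod (2 ^ n)) ^ t = -1 ↔ 2 ^ n ∣ t := by
    rw [lucasMatrix_pow_eq_one_or_neg_one_iff, two_pow_dvd_lucasU_iff ha]
  exact ⟨⟨by positivity, (key _).mpr dvd_rfl⟩,
    fun t ⟨ht, h⟩ => Nat.le_of_dvd ht ((key t).mp h)⟩

theorem stmt_18 (n : ℕ) (hn : 2 ≤ n) (N : ℕ) (hN : N = 2 ^ n) (a : ℤ) (ha : Odd a) :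
    IsLeast {t : ℕ | 0 < t ∧
      ((!![((2 * a : ℤ) : ZMod N), -1; 1, 0] : Matrix (Fin 2) (Fin 2) (ZMod N)) ^ t = 1 ∨
       (!![((2 * a : ℤ) : ZMod N), -1; 1, 0] : Matrix (Fin 2) (Fin 2) (ZMod N)) ^ t = -1)}
      (2 ^ n) :=
  stmt_18_general n N hN a ha
end

section
/- Let N = p_1^{α_1}···p_r^{α_r} with the p_i distinct primes and α_i ≥ 1, and let k = a·p_1^{β_1}···p_r^{β_r} where 1 ≤ β_i ≤ α_i for all i and a is an integer divisible by none of the p_i. Then the smallest positive integer t such that the product of t copies of [[k, -1], [1, 0]] over Z/NZ equals ± Id is t = 2·p_1^{α_1-β_1}···p_r^{α_r-β_r}. In particular, for N = l^n with l, n ≥ 2 and k = l, this minimal size is 2·l^{n-1}. -/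
/-!
Write `M = !![k, -1; 1, 0]`. Cayley–Hamilton gives `M ^ 2 = -(1 - k • M)`, so
`M ^ (2 * s) = (-1) ^ s * (1 - k • M) ^ s`. Modulo a prime `p ∣ gcd(N, k)` we have `M ^ 2 = -1`,
which forces every `t` with `M ^ t = ±1` to be even.

Fix a prime `p ∣ N` with `p ^ β ∥ gcd(N, k)` and `p ^ e ∥ N / gcd(N, k)`. In the binomial
expansion of `(1 - k • M) ^ s` the coefficients `s.choose j * k ^ j`, `j ≥ 1`, vanish modulo
`p ^ (β + e)` once `p ^ e ∣ s`, because `v_p (s.choose j) ≥ v_p s - v_p j`. For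
`s = p ^ (e - 1)` the `(1, 0)`-entry is instead `-s * k` modulo `p ^ (β + e)`, which is nonzero;
so `1 - k • M` has order exactly `p ^ e` there. Its powers are never `-1`, as the `(0, 0)`-entry
is `1` modulo `k ^ 2`.
Hence the minimal `t` is `2 * (N / gcd(N, k))`, which is `2 * ∏ pᵢ ^ (αᵢ - βᵢ)`.
-/

open Finset

theorem Nat.dvd_choose_mul_self (s j : ℕ) : s ∣ s.choose j * j := by
  rcases j with _ | j
  · simp
  rcases s with _ | s
  · simp
  exact ⟨s.choose j, (add_one_mul_choose_eq s j).symm⟩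

theorem Nat.factorization_add_two_le (p : ℕ) {j : ℕ} (hj : 3 ≤ j) :
    j.factorization p + 2 ≤ j := by
  set v := j.factorization p
  by_cases hv : v ≤ 1
  · omega
  have h2 : v + 2 ≤ 2 ^ v := by
    have h := Nat.lt_two_pow_self (n := v - 2)
    rw [show v = v - 2 + 2 by omega, pow_add]
    omega
  have hp : p.Prime := by
    by_contra hp
    simp [v, Nat.factorization_eq_zero_of_not_prime j hp] at hv
  calc v + 2 ≤ 2 ^ v := h2
    _ ≤ p ^ v := Nat.pow_le_pow_left hp.two_le v
    _ ≤ j := Nat.le_of_dvd (by omega) (Nat.ordProj_dvd j p)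

theorem pow_dvd_pow_of_pow_dvd {α : Type*} [CommMonoid α] {x k : α} {β a j : ℕ}
    (hk : x ^ β ∣ k) (h : a ≤ β * j) : x ^ a ∣ k ^ j :=
  (pow_dvd_pow x h).trans (by rw [pow_mul]; exact pow_dvd_pow_of_dvd hk j)

theorem Int.pow_add_dvd_choose_mul {p e b s j : ℕ} (hp : p.Prime) (hs : p ^ e ∣ s)
    (hj : j ≠ 0) {x : ℤ} (hx : (p : ℤ) ^ (j.factorization p + b) ∣ x) :
    (p : ℤ) ^ (e + b) ∣ s.choose j * x := by
  set v := j.factorization p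
  have hcop : Nat.Coprime (p ^ e) (j / p ^ v) := (Nat.coprime_ordCompl hp hj).pow_left e
  have hC : p ^ e ∣ s.choose j * p ^ v := by
    refine hcop.dvd_of_dvd_mul_right ?_
    rw [mul_assoc, Nat.ordProj_mul_ordCompl_eq_self]
    exact hs.trans (Nat.dvd_choose_mul_self s j)
  have hCx : (p : ℤ) ^ v * (p : ℤ) ^ (e + b) ∣ (p : ℤ) ^ v * (s.choose j * x) := by
    have h := mul_dvd_mul (Int.natCast_dvd_natCast.mpr hC) hx
    push_cast at h
    rwa [show (p : ℤ) ^ v * (p : ℤ) ^ (e + b) = (p : ℤ) ^ e * (p : ℤ) ^ (v + b) by ring,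
      show (p : ℤ) ^ v * (s.choose j * x) = s.choose j * (p : ℤ) ^ v * x by ring]
  exact (mul_dvd_mul_iff_left (pow_ne_zero _ (by exact_mod_cast hp.ne_zero))).mp hCx

theorem Int.pow_add_dvd_choose_mul_pow {p e β s j : ℕ} (hp : p.Prime) (hβ : 1 ≤ β)
    (hs : p ^ e ∣ s) (hj : j ≠ 0) {k : ℤ} (hk : (p : ℤ) ^ β ∣ k) :
    (p : ℤ) ^ (e + β) ∣ s.choose j * k ^ j := by
  have hv := Nat.factorization_lt p hj
  exact Int.pow_add_dvd_choose_mul hp hs hj (pow_dvd_pow_of_pow_dvd hk (by nlinarith))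

theorem Int.one_le_factorization_gcd {N : ℕ} {k : ℤ} (hN : N ≠ 0) {p : ℕ} (hp : p.Prime)
    (hpN : p ∣ N) (hpk : (p : ℤ) ∣ k) : 1 ≤ (Int.gcd N k).factorization p :=
  hp.factorization_pos_of_dvd (Int.gcd_ne_zero_left (by exact_mod_cast hN))
    (Int.dvd_gcd (Int.natCast_dvd_natCast.mpr hpN) hpk)

theorem Int.gcd_mul_div_gcd (N : ℕ) (k : ℤ) : Int.gcd N k * (N / Int.gcd N k) = N :=
  Nat.mul_div_cancel' (Int.natCast_dvd_natCast.mp (Int.gcd_dvd_left _ _))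

theorem Int.div_gcd_ne_zero {N : ℕ} (hN : N ≠ 0) (k : ℤ) : N / Int.gcd N k ≠ 0 := by
  intro h
  have := Int.gcd_mul_div_gcd N k
  rw [h, mul_zero] at this
  exact hN this.symm

theorem Int.pow_factorization_gcd_dvd {N : ℕ} {k : ℤ} (p : ℕ) :
    (p : ℤ) ^ (Int.gcd N k).factorization p ∣ k :=
  (Int.natCast_dvd_natCast.mpr (Nat.ordProj_dvd _ p)).trans
    (by exact_mod_cast Int.gcd_dvd_right _ _)

section Binomial

variable {R : Type*} [CommRing R]

theorem one_sub_smul_pow {A : Type*} [Ring A] [Algebra R A] (c : R) (Y : A) (m : ℕ) :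
    (1 - c • Y) ^ m = ∑ j ∈ range (m + 1), ((m.choose j : R) * (-c) ^ j) • Y ^ j := by
  rw [sub_eq_add_neg, ← neg_smul, add_comm, (Commute.one_right _).add_pow]
  refine sum_congr rfl fun j _ => ?_
  rw [one_pow, mul_one, smul_pow, ← Nat.cast_comm, ← nsmul_eq_mul, mul_smul,
    Nat.cast_smul_eq_nsmul]

theorem one_sub_smul_pow_eq_one {A : Type*} [Ring A] [Algebra R A] (c : R) (Y : A) {m : ℕ}
    (h : ∀ j ∈ Icc 1 m, (m.choose j : R) * (-c) ^ j = 0) : (1 - c • Y) ^ m = 1 := by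
  rw [one_sub_smul_pow, sum_range_succ', sum_eq_zero fun j hj => ?_]
  · simp
  · rw [h (j + 1) (by simp at hj ⊢; omega), zero_smul]

theorem one_sub_smul_pow_apply {n : Type*} [Fintype n] [DecidableEq n] (c : R)
    (Y : Matrix n n R) (m : ℕ) (i j : n) :
    ((1 - c • Y) ^ m) i j =
      ∑ l ∈ range (m + 1), (m.choose l : R) * (-c) ^ l * (Y ^ l) i j := by
  simp [one_sub_smul_pow, Matrix.sum_apply, mul_assoc]

end Binomial

namespace MonomialSolution

variable {R S : Type*} [CommRing R] [CommRing S]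

def M (c : R) : Matrix (Fin 2) (Fin 2) R := !![c, -1; 1, 0]

theorem M_zero_zero (c : R) : M c 0 0 = c := rfl

theorem M_one_zero (c : R) : M c 1 0 = 1 := rfl

theorem M_sq (c : R) : M c ^ 2 = -(1 - c • M c) := by
  ext i j
  fin_cases i <;> fin_cases j <;> simp [M, sq]
  ring

theorem M_pow_two_mul (c : R) (s : ℕ) : M c ^ (2 * s) = (-1) ^ s * (1 - c • M c) ^ s := by
  rw [pow_mul, M_sq, neg_pow]

theorem M_pow_two_mul_eq_pm_one_iff (c : R) (s : ℕ) :
    (M c ^ (2 * s) = 1 ∨ M c ^ (2 * s) = -1) ↔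
      ((1 - c • M c) ^ s = 1 ∨ (1 - c • M c) ^ s = -1) := by
  rw [M_pow_two_mul]
  rcases neg_one_pow_eq_or (Matrix (Fin 2) (Fin 2) R) s with h | h <;> rw [h]
  · simp
  · simp [neg_eq_iff_eq_neg, or_comm]

theorem even_of_M_zero_pow [Nontrivial R] {t : ℕ} (h : M (0 : R) ^ t = 1 ∨ M (0 : R) ^ t = -1) :
    Even t := by
  by_contra ht
  obtain ⟨i, rfl⟩ := Nat.not_even_iff_odd.mp ht
  have h01 : (M (0 : R) ^ (2 * i + 1)) 0 1 = 0 := by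
    rcases h with h | h <;> simp [h]
  rw [pow_succ, M_pow_two_mul, zero_smul, sub_zero, one_pow, mul_one] at h01
  rcases neg_one_pow_eq_or (Matrix (Fin 2) (Fin 2) R) i with h | h <;> simp [h, M] at h01

theorem mapMatrix_M (f : R →+* S) (c : R) : f.mapMatrix (M c) = M (f c) := by
  ext i j
  fin_cases i <;> fin_cases j <;> simp [M]

theorem mapMatrix_one_sub_smul_M (f : R →+* S) (c : R) :
    f.mapMatrix (1 - c • M c) = 1 - f c • M (f c) := by
  rw [map_sub, map_one, ← mapMatrix_M]
  ext i j
  simp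

theorem M_pow_eq_pm_one_map (f : R →+* S) {c : R} {t : ℕ}
    (h : M c ^ t = 1 ∨ M c ^ t = -1) : M (f c) ^ t = 1 ∨ M (f c) ^ t = -1 := by
  rw [← mapMatrix_M, ← map_pow]
  rcases h with h | h <;> rw [h]
  · exact .inl (map_one _)
  · exact .inr (by rw [map_neg, map_one])

theorem sq_dvd_one_sub_smul_M_pow_zero_zero_sub_one (k : ℤ) (s : ℕ) :
    k ^ 2 ∣ ((1 - k • M k) ^ s) 0 0 - 1 := by
  rw [one_sub_smul_pow_apply, sum_range_succ']
  simp only [Nat.choose_zero_right, pow_zero, Nat.cast_one, one_mul, Matrix.one_apply_eq,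
    add_sub_cancel_right]
  refine dvd_sum fun l _ => ?_
  rcases l with _ | l
  · rw [zero_add, pow_one, pow_one, M_zero_zero, Nat.choose_one_right]
    exact ⟨-s, by ring⟩
  · rw [show (-k) ^ (l + 1 + 1) = k ^ 2 * (-k) ^ l by ring]
    exact ((dvd_mul_right _ _).mul_left _).mul_right _

theorem dvd_M_pow_two_mul_one_zero {d k : ℤ} (hk : d ∣ k) (i : ℕ) :
    d ∣ (M k ^ (2 * i)) 1 0 := by
  let f := Ideal.Quotient.mk (Ideal.span {d})
  have hfk : f k = 0 := (Ideal.Quotient.eq_zero_iff_dvd d k).mpr hk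
  rw [← Ideal.Quotient.eq_zero_iff_dvd]
  change (f.mapMatrix (M k ^ (2 * i))) 1 0 = 0
  rw [map_pow, mapMatrix_M, hfk, M_pow_two_mul, zero_smul, sub_zero, one_pow, mul_one]
  rcases neg_one_pow_eq_or (Matrix (Fin 2) (Fin 2) (ℤ ⧸ Ideal.span {d})) i with h | h <;>
    simp [h]

theorem pow_dvd_neg_pow_mul_M_pow_one_zero {p β j : ℕ} (hβ : 1 ≤ β) (hj : 2 ≤ j) {k : ℤ}
    (hk : (p : ℤ) ^ β ∣ k) :
    (p : ℤ) ^ (j.factorization p + (β + 1)) ∣ (-k) ^ j * (M k ^ j) 1 0 := by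
  have hk' : (p : ℤ) ^ β ∣ -k := dvd_neg.mpr hk
  -- `M ^ (2 * i) ≡ (-1) ^ i` modulo `k`, so the even terms carry an extra factor `p ^ β`.
  rcases Nat.even_or_odd' j with ⟨i, rfl | rfl⟩
  · have hv := Nat.factorization_lt p (show 2 * i ≠ 0 by omega)
    rw [show (2 * i).factorization p + (β + 1) = ((2 * i).factorization p + 1) + β by omega,
      pow_add]
    exact mul_dvd_mul (pow_dvd_pow_of_pow_dvd hk' (by nlinarith)) (dvd_M_pow_two_mul_one_zero hk i)
  · have hv := Nat.factorization_add_two_le p (show 3 ≤ 2 * i + 1 by omega)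
    exact (pow_dvd_pow_of_pow_dvd hk' (by nlinarith)).mul_right _

theorem pow_dvd_one_sub_smul_M_pow_one_zero_add {p β e : ℕ} (hp : p.Prime) (hβ : 1 ≤ β)
    {k : ℤ} (hk : (p : ℤ) ^ β ∣ k) :
    (p : ℤ) ^ (β + (e + 1)) ∣ ((1 - k • M k) ^ (p ^ e)) 1 0 + (p ^ e : ℕ) * k := by
  obtain ⟨m, hm⟩ : ∃ m, p ^ e = m + 1 :=
    ⟨p ^ e - 1, (Nat.sub_add_cancel (Nat.one_le_pow _ _ hp.pos)).symm⟩
  rw [one_sub_smul_pow_apply, hm, sum_range_succ', sum_range_succ']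
  simp only [zero_add, Nat.choose_zero_right, Nat.choose_one_right, pow_zero, pow_one, M_one_zero,
    Matrix.one_apply_ne one_ne_zero, mul_zero, add_zero, mul_one, mul_neg, Nat.cast_add,
    Nat.cast_one, neg_add_cancel_right]
  refine dvd_sum fun l _ => ?_
  rw [mul_assoc, ← hm, show β + (e + 1) = e + (β + 1) by omega]
  exact Int.pow_add_dvd_choose_mul hp dvd_rfl (by omega)
    (pow_dvd_neg_pow_mul_M_pow_one_zero hβ (by omega) hk)

theorem one_sub_smul_M_pow_apply_intCast (d : ℕ) (k : ℤ) (s : ℕ) (i j : Fin 2) :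
    ((1 - (k : ZMod d) • M (k : ZMod d)) ^ s) i j = (((1 - k • M k) ^ s) i j : ℤ) := by
  rw [← eq_intCast (Int.castRingHom (ZMod d)), ← mapMatrix_one_sub_smul_M, ← map_pow]
  rfl

theorem one_sub_smul_M_pow_ne_neg_one {d q : ℕ} (hqd : q ∣ d) (hq : ¬ (q : ℤ) ∣ 2)
    {k : ℤ} (hk : (q : ℤ) ∣ k ^ 2) (s : ℕ) :
    (1 - (k : ZMod d) • M (k : ZMod d)) ^ s ≠ -1 := by
  intro h
  have h00 : ((((1 - k • M k) ^ s) 0 0 : ℤ) : ZMod d) = ((-1 : ℤ) : ZMod d) := by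
    rw [← one_sub_smul_M_pow_apply_intCast, h]
    simp
  rw [ZMod.intCast_eq_intCast_iff_dvd_sub] at h00
  have h2 := dvd_add (hk.trans (sq_dvd_one_sub_smul_M_pow_zero_zero_sub_one k s))
    ((Int.natCast_dvd_natCast.mpr hqd).trans h00)
  rw [sub_add_sub_cancel', ← neg_add', dvd_neg] at h2
  exact hq h2

theorem one_sub_smul_M_pow_eq_one_of_dvd {N m : ℕ} {k : ℤ}
    (h : ∀ j ∈ Icc 1 m, (N : ℤ) ∣ m.choose j * (-k) ^ j) :
    (1 - (k : ZMod N) • M (k : ZMod N)) ^ m = 1 :=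
  one_sub_smul_pow_eq_one _ _ fun j hj => by
    exact_mod_cast (ZMod.intCast_zmod_eq_zero_iff_dvd _ N).mpr (h j hj)

section PrimePower

variable {p β e : ℕ} {k : ℤ}

theorem one_sub_smul_M_pow_prime_pow_eq_one (hp : p.Prime) (hβ : 1 ≤ β)
    (hk : (p : ℤ) ^ β ∣ k) :
    (1 - (k : ZMod (p ^ (β + e))) • M (k : ZMod (p ^ (β + e)))) ^ (p ^ e) = 1 :=
  one_sub_smul_M_pow_eq_one_of_dvd fun j hj => by
    rw [Nat.cast_pow, add_comm]
    exact Int.pow_add_dvd_choose_mul_pow hp hβ dvd_rfl (by simp at hj; omega) (dvd_neg.mpr hk)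

theorem one_sub_smul_M_pow_prime_pow_ne_one (hp : p.Prime) (hβ : 1 ≤ β)
    (hk : (p : ℤ) ^ β ∣ k) (hk' : ¬ (p : ℤ) ^ (β + 1) ∣ k) :
    (1 - (k : ZMod (p ^ (β + (e + 1)))) • M (k : ZMod (p ^ (β + (e + 1))))) ^ (p ^ e) ≠ 1 := by
  intro h
  have h10 : ((((1 - k • M k) ^ p ^ e) 1 0 : ℤ) : ZMod (p ^ (β + (e + 1)))) = 0 := by
    rw [← one_sub_smul_M_pow_apply_intCast, h]
    simp
  rw [ZMod.intCast_zmod_eq_zero_iff_dvd] at h10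
  have hdvd := dvd_sub (pow_dvd_one_sub_smul_M_pow_one_zero_add hp hβ hk) h10
  rw [add_sub_cancel_left, Nat.cast_pow, show β + (e + 1) = e + (β + 1) by omega, pow_add] at hdvd
  exact hk' ((mul_dvd_mul_iff_left (pow_ne_zero _ (by exact_mod_cast hp.ne_zero))).mp hdvd)

theorem prime_pow_dvd_of_M_pow_two_mul_eq_pm_one (hp : p.Prime) (hβ : 1 ≤ β) (he : 1 ≤ e)
    (hk : (p : ℤ) ^ β ∣ k) (hk' : ¬ (p : ℤ) ^ (β + 1) ∣ k) {s : ℕ}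
    (h : M (k : ZMod (p ^ (β + e))) ^ (2 * s) = 1 ∨ M (k : ZMod (p ^ (β + e))) ^ (2 * s) = -1) :
    p ^ e ∣ s := by
  have := Fact.mk hp
  have hp2 : ¬ ((p ^ 2 : ℕ) : ℤ) ∣ 2 := fun h2 => by
    have h2' := Int.le_of_dvd two_pos h2
    push_cast at h2'
    nlinarith [hp.two_le]
  rw [M_pow_two_mul_eq_pm_one_iff] at h
  have hs := h.resolve_right <| one_sub_smul_M_pow_ne_neg_one (pow_dvd_pow p (by omega)) hp2
    (by exact_mod_cast pow_dvd_pow_of_dvd ((dvd_pow_self _ (by omega)).trans hk) 2) s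
  obtain ⟨e, rfl⟩ : ∃ e', e = e' + 1 := ⟨e - 1, by omega⟩
  rw [← orderOf_eq_prime_pow (one_sub_smul_M_pow_prime_pow_ne_one hp hβ hk hk')
    (one_sub_smul_M_pow_prime_pow_eq_one hp hβ hk)]
  exact orderOf_dvd_of_pow_eq_one hs

end PrimePower

section CompositeModulus

variable {N : ℕ} {k : ℤ}

theorem M_pow_two_mul_div_gcd_eq_pm_one (hN : N ≠ 0)
    (hk : ∀ p, p.Prime → p ∣ N → (p : ℤ) ∣ k) :
    M (k : ZMod N) ^ (2 * (N / Int.gcd N k)) = 1 ∨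
      M (k : ZMod N) ^ (2 * (N / Int.gcd N k)) = -1 := by
  set g := Int.gcd N k
  set D := N / g
  have hg : g ≠ 0 := Int.gcd_ne_zero_left (by exact_mod_cast hN)
  have hND : N = g * D := (Int.gcd_mul_div_gcd N k).symm
  have hD : D ≠ 0 := Int.div_gcd_ne_zero hN k
  rw [M_pow_two_mul_eq_pm_one_iff]
  refine .inl (one_sub_smul_M_pow_eq_one_of_dvd fun j hj => ?_)
  rw [← Int.natAbs_dvd_natAbs, Int.natAbs_natCast, Nat.dvd_iff_prime_pow_dvd_dvd]
  intro p a hp hpa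
  rcases Nat.eq_zero_or_pos a with rfl | ha
  · simp
  have hpN : p ∣ N := (dvd_pow_self p ha.ne').trans hpa
  have hβ := Int.one_le_factorization_gcd hN hp hpN (hk p hp hpN)
  have ha' : a ≤ D.factorization p + g.factorization p := by
    rw [← Finsupp.add_apply, add_comm, ← Nat.factorization_mul hg hD, ← hND]
    exact (hp.pow_dvd_iff_le_factorization hN).mp hpa
  rw [← Int.natCast_dvd]
  exact (pow_dvd_pow _ ha').trans (Int.pow_add_dvd_choose_mul_pow hp hβ (Nat.ordProj_dvd D p)
    (by simp at hj; omega) (dvd_neg.mpr (Int.pow_factorization_gcd_dvd p)))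

theorem two_mul_div_gcd_dvd_of_M_pow_eq_pm_one (hN : 2 ≤ N)
    (hk : ∀ p, p.Prime → p ∣ N → (p : ℤ) ∣ k) {t : ℕ}
    (ht : M (k : ZMod N) ^ t = 1 ∨ M (k : ZMod N) ^ t = -1) : 2 * (N / Int.gcd N k) ∣ t := by
  set g := Int.gcd N k
  set D := N / g
  have hg : g ≠ 0 := Int.gcd_ne_zero_left (by omega)
  have hND : N = g * D := (Int.gcd_mul_div_gcd N k).symm
  obtain ⟨q, hq, hqN⟩ := Nat.exists_prime_and_dvd (show N ≠ 1 by omega)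
  have := Fact.mk hq
  have htq := M_pow_eq_pm_one_map (ZMod.castHom hqN (ZMod q)) ht
  rw [map_intCast, (ZMod.intCast_zmod_eq_zero_iff_dvd k q).mpr (hk q hq hqN)] at htq
  obtain ⟨s, rfl⟩ := (even_of_M_zero_pow htq).two_dvd
  refine mul_dvd_mul_left 2 ((Nat.dvd_iff_prime_pow_dvd_dvd s D).mpr fun p a hp hpa => ?_)
  rcases Nat.eq_zero_or_pos a with rfl | ha
  · simp
  have hpN : p ∣ N := (dvd_pow_self p ha.ne').trans (hpa.trans (Nat.div_dvd_of_dvd ⟨D, hND⟩))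
  set β := g.factorization p
  have hpβa : p ^ (β + a) ∣ N := by
    rw [pow_add, hND]
    exact mul_dvd_mul (Nat.ordProj_dvd g p) hpa
  have hk' : ¬ (p : ℤ) ^ (β + 1) ∣ k := fun h => Nat.pow_succ_factorization_not_dvd hg hp <|
    Int.dvd_gcd (by exact_mod_cast (pow_dvd_pow p (by omega)).trans hpβa) h
  exact prime_pow_dvd_of_M_pow_two_mul_eq_pm_one hp (Int.one_le_factorization_gcd (by omega) hp hpN
    (hk p hp hpN)) ha (Int.pow_factorization_gcd_dvd p) hk'
    (by simpa using M_pow_eq_pm_one_map (ZMod.castHom hpβa (ZMod (p ^ (β + a)))) ht)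

theorem isLeast_M_pow_eq_pm_one (hN : 2 ≤ N)
    (hk : ∀ p, p.Prime → p ∣ N → (p : ℤ) ∣ k) :
    IsLeast {t : ℕ | 0 < t ∧ (M (k : ZMod N) ^ t = 1 ∨ M (k : ZMod N) ^ t = -1)}
      (2 * (N / Int.gcd N k)) := by
  have hD := Int.div_gcd_ne_zero (show N ≠ 0 by omega) k
  exact ⟨⟨by omega, M_pow_two_mul_div_gcd_eq_pm_one (by omega) hk⟩,
    fun t ⟨ht0, ht⟩ => Nat.le_of_dvd ht0 (two_mul_div_gcd_dvd_of_M_pow_eq_pm_one hN hk ht)⟩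

end CompositeModulus

end MonomialSolution

section PrimeFactorization

variable {r : ℕ} {p α β : Fin r → ℕ}

theorem Nat.eq_of_prime_dvd_prod_pow (hp : ∀ i, (p i).Prime) {q : ℕ} (hq : q.Prime)
    (h : q ∣ ∏ i, p i ^ α i) : ∃ i, q = p i := by
  obtain ⟨i, -, hi⟩ := hq.prime.exists_mem_finset_dvd h
  exact ⟨i, (Nat.prime_dvd_prime_iff_eq hq (hp i)).mp (hq.dvd_of_dvd_pow hi)⟩

theorem two_le_prod_pow (hr : 1 ≤ r) (hp : ∀ i, (p i).Prime) (hα : ∀ i, 1 ≤ α i) :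
    2 ≤ ∏ i, p i ^ α i := by
  let i₀ : Fin r := ⟨0, hr⟩
  have hdvd : p i₀ ∣ ∏ i, p i ^ α i :=
    (dvd_pow_self _ (Nat.one_le_iff_ne_zero.mp (hα i₀))).trans
      (dvd_prod_of_mem _ (mem_univ i₀))
  exact (hp i₀).two_le.trans (Nat.le_of_dvd (prod_pos fun i _ => pow_pos (hp i).pos _) hdvd)

theorem prime_dvd_of_dvd_prod_pow (hp : ∀ i, (p i).Prime) (hβ : ∀ i, 1 ≤ β i) (a : ℤ)
    {q : ℕ} (hq : q.Prime) (hqN : q ∣ ∏ i, p i ^ α i) :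
    (q : ℤ) ∣ a * ∏ i, (p i : ℤ) ^ β i := by
  obtain ⟨i, rfl⟩ := Nat.eq_of_prime_dvd_prod_pow hp hq hqN
  exact ((dvd_pow_self _ (Nat.one_le_iff_ne_zero.mp (hβ i))).trans
    (dvd_prod_of_mem (fun j => (p j : ℤ) ^ β j) (mem_univ i))).mul_left a

theorem prod_pow_div_gcd (hp : ∀ i, (p i).Prime) (hβα : ∀ i, β i ≤ α i) {a : ℤ}
    (ha : ∀ i, ¬ (p i : ℤ) ∣ a) :
    (∏ i, p i ^ α i) / Int.gcd (∏ i, p i ^ α i : ℕ) (a * ∏ i, (p i : ℤ) ^ β i) =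
      ∏ i, p i ^ (α i - β i) := by
  set B := ∏ i, p i ^ β i
  have hN : ∏ i, p i ^ α i = B * ∏ i, p i ^ (α i - β i) := by
    rw [← prod_mul_distrib]
    exact prod_congr rfl fun i _ => by rw [← pow_add, Nat.add_sub_cancel' (hβα i)]
  have hcop : Nat.Coprime a.natAbs (∏ i, p i ^ α i) := (Nat.coprime_of_dvd fun q hq hqN hqa => by
    obtain ⟨i, rfl⟩ := Nat.eq_of_prime_dvd_prod_pow hp hq hqN
    exact ha i (Int.natCast_dvd.mpr hqa)).symm
  have hgcd : Int.gcd (∏ i, p i ^ α i : ℕ) (a * ∏ i, (p i : ℤ) ^ β i) = B := by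
    rw [Int.gcd_eq_natAbs, Int.natAbs_natCast, Int.natAbs_mul,
      show ∏ i, (p i : ℤ) ^ β i = (B : ℤ) by push_cast [B]; rfl, Int.natAbs_natCast,
      Nat.gcd_comm, hcop.gcd_mul_left_cancel, Nat.gcd_eq_left ⟨_, hN⟩]
  rw [hgcd, hN, Nat.mul_div_cancel_left _ (prod_pos fun i _ => pow_pos (hp i).pos _)]

end PrimeFactorization

theorem pow_div_gcd_self {l n : ℕ} (hl : l ≠ 0) (hn : n ≠ 0) :
    l ^ n / Int.gcd (l ^ n : ℕ) (l : ℤ) = l ^ (n - 1) := by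
  rw [Int.gcd_natCast_natCast, Nat.gcd_eq_right (dvd_pow_self l hn)]
  exact Nat.div_eq_of_eq_mul_left (by omega) (by rw [← pow_succ, Nat.sub_add_cancel (by omega)])

/-- if N = ∏ pᵢ^αᵢ and k = a·∏ pᵢ^βᵢ with 1 ≤ βᵢ ≤ αᵢ and a divisible
by none of the pᵢ, then the minimal monomial solution size for k over Z/NZ is
2·∏ pᵢ^(αᵢ-βᵢ). In particular for N = l^n (l, n ≥ 2) and k = l it is 2·l^(n-1). -/
theorem stmt_19 :
    (∀ (r : ℕ), 1 ≤ r → ∀ (p α β : Fin r → ℕ),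
      (∀ i, (p i).Prime) → Function.Injective p →
      (∀ i, 1 ≤ β i) → (∀ i, β i ≤ α i) →
      ∀ (a : ℤ), (∀ i, ¬ ((p i : ℤ) ∣ a)) →
      ∀ (N : ℕ), N = ∏ i, p i ^ α i →
      ∀ (k : ℤ), k = a * ∏ i, (p i : ℤ) ^ β i →
      IsLeast {t : ℕ | 0 < t ∧
        ((!![((k : ℤ) : ZMod N), -1; 1, 0] : Matrix (Fin 2) (Fin 2) (ZMod N)) ^ t = 1 ∨
         (!![((k : ℤ) : ZMod N), -1; 1, 0] : Matrix (Fin 2) (Fin 2) (ZMod N)) ^ t = -1)}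
        (2 * ∏ i, p i ^ (α i - β i))) ∧
    (∀ (l n : ℕ), 2 ≤ l → 2 ≤ n → ∀ (N : ℕ), N = l ^ n →
      IsLeast {t : ℕ | 0 < t ∧
        ((!![((l : ℕ) : ZMod N), -1; 1, 0] : Matrix (Fin 2) (Fin 2) (ZMod N)) ^ t = 1 ∨
         (!![((l : ℕ) : ZMod N), -1; 1, 0] : Matrix (Fin 2) (Fin 2) (ZMod N)) ^ t = -1)}
        (2 * l ^ (n - 1))) := by
  refine ⟨fun r hr p α β hp _ hβ hβα a ha N hN k hk => ?_, fun l n hl hn N hN => ?_⟩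
  · subst hN hk
    have h := MonomialSolution.isLeast_M_pow_eq_pm_one (two_le_prod_pow hr hp fun i => (hβ i).trans (hβα i))
      fun q hq hqN => prime_dvd_of_dvd_prod_pow hp hβ a hq hqN
    rwa [prod_pow_div_gcd hp hβα ha] at h
  · subst hN
    have h := MonomialSolution.isLeast_M_pow_eq_pm_one (k := l) (hl.trans (Nat.le_self_pow (show n ≠ 0 by omega) l))
      fun q hq hqN => Int.natCast_dvd_natCast.mpr (hq.dvd_of_dvd_pow hqN)
    rw [pow_div_gcd_self (by omega) (by omega)] at h
    simpa only [Int.cast_natCast, MonomialSolution.M] using h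
end
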